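/- The double sequences A^{id,1} and A^{s,id} are both horizontally and vertically log-concave: for every fixed n ≥ 1 and every m ≥ 1, (A_{n,m}^{g,h})² ≥ A_{n,m−1}^{g,h}·A_{n,m+1}^{g,h}, and for every fixed m ≥ 1 and every n ≥ 2, (A_{n,m}^{g,h})² ≥ A_{n−1,m}^{g,h}·A_{n+1,m}^{g,h}, for (g,h) = (id,1) and for (g,h) = (s,id). -/

import Mathlib

/-!
For `g = id`, `h = 1` the columns of `A` are convolution powers of `k ↦ k = C(k, 1)`, so the
upper Vandermonde identity `∑_{i+j=n} C(i,a) C(j,b) = C(n+1, a+b+1)` gives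
`A^{id,1}_{n,m} = C(n+m-1, 2m-1)` for `m ≥ 1`. For `(s, id)`, writing `k² = C(k,1) + 2 C(k,2)`
in the same convolution gives `A^{s,id}_{n,m} = A^{id,1}_{n,m} / m!`. Both log-concavity
statements for `C(n+m-1, 2m-1)` follow by comparing consecutive ratios of binomial coefficients,
and dividing by `m!` preserves them because `(m!)² ≤ (m-1)! (m+1)!`.
-/

/-- The polynomials `P_n^{g,h}` defined by `P_0 = 1` and
`P_n(x) = (x / h(n)) * ∑_{k=1}^n g(k) P_{n-k}(x)` for `n ≥ 1`. -/
noncomputable def HVP (g h : ℕ → ℝ) : ℕ → Polynomial ℝ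
  | 0 => 1
  | (n + 1) =>
      Polynomial.C (h (n + 1))⁻¹ * Polynomial.X *
        ∑ k ∈ (Finset.Icc 1 (n + 1)).attach, Polynomial.C (g k.1) * HVP g h (n + 1 - k.1)
  decreasing_by
    have := (Finset.mem_Icc.mp k.2).1
    omega

/-- `A_{n,m}^{g,h}`, the coefficient of `x^m` in `P_n^{g,h}(x)`.
(It vanishes automatically unless `1 ≤ m ≤ n`, except `A_{0,0} = 1`.) -/
noncomputable def HVA (g h : ℕ → ℝ) (n m : ℕ) : ℝ := (HVP g h n).coeff m

open Finset

theorem Finset.Nat.sum_antidiagonal_add_right_of_eq_zero {M : Type*} [AddCommMonoid M]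
    {m : ℕ} {f : ℕ → ℕ → M} (hf : ∀ i j, j < m → f i j = 0) (n : ℕ) :
    ∑ ij ∈ antidiagonal (n + m), f ij.1 ij.2 =
      ∑ ij ∈ antidiagonal n, f ij.1 (ij.2 + m) := by
  induction m generalizing f with
  | zero => rfl
  | succ m ih =>
    rw [← add_assoc, sum_antidiagonal_succ', hf _ _ m.succ_pos, zero_add,
      ih fun i j hj => hf i (j + 1) (by omega)]
    simp only [add_assoc]

namespace Nat

theorem sum_antidiagonal_choose_mul_choose (a b n : ℕ) :
    ∑ ij ∈ antidiagonal n, ij.1.choose a * ij.2.choose b = (n + 1).choose (a + b + 1) := by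
  induction n generalizing b with
  | zero => cases a <;> cases b <;> simp [choose_eq_zero_of_lt]
  | succ n ih =>
    rw [Finset.Nat.sum_antidiagonal_succ', choose_succ_succ (n + 1)]
    cases b with
    | zero =>
      have ih0 := ih 0
      simp only [choose_zero_right, mul_one, add_zero] at ih0 ⊢
      rw [ih0]
    | succ b =>
      simp only [choose_succ_succ' _ b, choose_zero_succ, mul_zero, zero_add, mul_add,
        sum_add_distrib, ih]
      rfl

theorem sum_antidiagonal_choose_mul_add_choose {a b m : ℕ} (hmb : m ≤ b) (n : ℕ) :
    ∑ ij ∈ antidiagonal n, ij.1.choose a * (ij.2 + m).choose b =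
      (n + m + 1).choose (a + b + 1) := by
  rw [← Finset.Nat.sum_antidiagonal_add_right_of_eq_zero
    (f := fun i j => i.choose a * j.choose b), sum_antidiagonal_choose_mul_choose]
  intro i j hj
  exact mul_eq_zero_of_right _ (choose_eq_zero_of_lt (by omega))

theorem sq_eq_choose_one_add_two_mul_choose_two (k : ℕ) :
    k ^ 2 = k.choose 1 + 2 * k.choose 2 := by
  induction k with
  | zero => rfl
  | succ k ih =>
    rw [choose_succ_succ' k 1, choose_one_right, choose_one_right] at *
    linear_combination ih

theorem mul_choose_add_two_mul_choose (n m : ℕ) :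
    (m + 2) * ((n + m + 1).choose (2 * m + 3) + 2 * (n + m + 1).choose (2 * m + 4)) =
      n * (n + m + 1).choose (2 * m + 3) := by
  have pascal := choose_succ_right_eq (n + m + 1) (2 * m + 3)
  rcases lt_or_ge n (m + 2) with hn | hn
  · rw [choose_eq_zero_of_lt (by omega : n + m + 1 < 2 * m + 3),
      choose_eq_zero_of_lt (by omega : n + m + 1 < 2 * m + 4)]
    simp
  · obtain ⟨d, rfl⟩ : ∃ d, n = d + m + 2 := ⟨n - (m + 2), by omega⟩
    rw [show d + m + 2 + m + 1 - (2 * m + 3) = d by omega] at pascal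
    linear_combination pascal

/-- Log-concavity from decreasing ratios: `z / y = r / s ≤ p / q = y / x`. -/
theorem mul_le_sq_of_mul_eq_of_mul_eq {x y z p q r s : ℕ} (hx : x * p = y * q)
    (hz : z * s = y * r) (hqr : q * r ≤ p * s) (hps : 0 < p * s) : x * z ≤ y ^ 2 := by
  refine Nat.le_of_mul_le_mul_right ?_ hps
  calc x * z * (p * s) = y ^ 2 * (q * r) := by
        rw [show x * z * (p * s) = x * p * (z * s) by ring, hx, hz]; ring
    _ ≤ y ^ 2 * (p * s) := Nat.mul_le_mul_left _ hqr

theorem choose_mul_choose_add_two_le_sq (n k : ℕ) :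
    n.choose k * (n + 2).choose k ≤ (n + 1).choose k ^ 2 := by
  rcases lt_or_ge (n + 1) k with hk | hk
  · rw [choose_eq_zero_of_lt (by omega : n < k), zero_mul]
    exact Nat.zero_le _
  obtain ⟨e, he⟩ : ∃ e, n + 1 = k + e := ⟨n + 1 - k, by omega⟩
  have hx := choose_mul_succ_eq n k
  have hz := choose_mul_succ_eq (n + 1) k
  rw [show n + 1 - k = e by omega] at hx
  rw [show n + 1 + 1 - k = e + 1 by omega] at hz
  refine mul_le_sq_of_mul_eq_of_mul_eq hx hz.symm ?_ (by positivity)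
  rw [he]
  nlinarith

theorem choose_mul_succ_mul_sub (n k : ℕ) :
    n.choose k * ((n + 1) * (n - k)) = (n + 1).choose (k + 2) * ((k + 1) * (k + 2)) := by
  have h₁ := add_one_mul_choose_eq n k
  have h₂ := choose_succ_right_eq (n + 1) (k + 1)
  rw [show n + 1 - (k + 1) = n - k by omega] at h₂
  calc n.choose k * ((n + 1) * (n - k)) = (n + 1).choose (k + 1) * (n - k) * (k + 1) := by
        rw [← mul_assoc, mul_comm (n.choose k), h₁]; ring
    _ = (n + 1).choose (k + 2) * ((k + 1) * (k + 2)) := by rw [← h₂]; ring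

theorem choose_mul_choose_add_four_le_sq (n k : ℕ) :
    n.choose k * (n + 2).choose (k + 4) ≤ (n + 1).choose (k + 2) ^ 2 := by
  rcases le_or_gt n k with hnk | hkn
  · rw [choose_eq_zero_of_lt (by omega : n + 2 < k + 4), mul_zero]
    exact Nat.zero_le _
  obtain ⟨d, rfl⟩ : ∃ d, n = k + 1 + d := ⟨n - (k + 1), by omega⟩
  have hx := choose_mul_succ_mul_sub (k + 1 + d) k
  have hz := choose_mul_succ_mul_sub (k + 1 + d + 1) (k + 2)
  rw [show k + 1 + d - k = d + 1 by omega] at hx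
  rw [show k + 1 + d + 1 - (k + 2) = d by omega] at hz
  refine mul_le_sq_of_mul_eq_of_mul_eq hx hz.symm ?_ (by positivity)
  calc (k + 1) * (k + 2) * ((k + 1 + d + 1 + 1) * d)
      ≤ (k + 2 + 1) * (k + 2 + 2) * ((k + 1 + d + 1) * (d + 1)) :=
        Nat.mul_le_mul (by nlinarith) (by nlinarith)
    _ = (k + 1 + d + 1) * (d + 1) * ((k + 2 + 1) * (k + 2 + 2)) := by ring

theorem factorial_succ_sq_le (n : ℕ) : (n + 1)! ^ 2 ≤ n ! * (n + 2)! := by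
  rw [factorial_succ (n + 1), factorial_succ n]
  nlinarith [factorial_pos n]

end Nat

theorem div_mul_div_le_div_sq {α : Type*} [Field α] [LinearOrder α] [IsStrictOrderedRing α]
    {x y z p q r : α} (hxz : x * z ≤ y ^ 2) (hxz₀ : 0 ≤ x * z) (hq : 0 < q)
    (hqpr : q ^ 2 ≤ p * r) : x / p * (z / r) ≤ (y / q) ^ 2 :=
  calc x / p * (z / r) = x * z / (p * r) := div_mul_div_comm _ _ _ _
    _ ≤ x * z / q ^ 2 := div_le_div_of_nonneg_left hxz₀ (pow_pos hq 2) hqpr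
    _ ≤ y ^ 2 / q ^ 2 := div_le_div_of_nonneg_right hxz (sq_nonneg q)
    _ = (y / q) ^ 2 := (div_pow y q 2).symm

open Polynomial

section Recursion

variable {g h : ℕ → ℝ}

theorem HVA_zero_zero : HVA g h 0 0 = 1 := by simp [HVA, HVP]

theorem HVA_zero_succ (m : ℕ) : HVA g h 0 (m + 1) = 0 := by simp [HVA, HVP, coeff_one]

theorem HVA_succ_zero (n : ℕ) : HVA g h (n + 1) 0 = 0 := by simp [HVA, HVP]

theorem HVA_succ_succ (n m : ℕ) :
    HVA g h (n + 1) (m + 1) =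
      (h (n + 1))⁻¹ * ∑ k ∈ Icc 1 (n + 1), g k * HVA g h (n + 1 - k) m := by
  rw [HVA, HVP, mul_assoc, coeff_C_mul, coeff_X_mul, finsetSum_coeff,
    sum_attach (Icc 1 (n + 1)) fun k => (C (g k) * HVP g h (n + 1 - k)).coeff m]
  simp only [coeff_C_mul, HVA]

theorem HVA_succ_right (hg : g 0 = 0) (n m : ℕ) :
    HVA g h n (m + 1) = (h n)⁻¹ * ∑ kj ∈ antidiagonal n, g kj.1 * HVA g h kj.2 m := by
  cases n with
  | zero => simp [HVA_zero_succ, hg]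
  | succ n =>
    rw [HVA_succ_succ, Nat.sum_antidiagonal_succ, hg, zero_mul, zero_add,
      Nat.sum_antidiagonal_eq_sum_range_succ (fun i j => g (i + 1) * HVA g h j m),
      ← Ico_add_one_right_eq_Icc, sum_Ico_eq_sum_range]
    refine congrArg _ (sum_congr rfl fun k hk => ?_)
    rw [mem_range] at hk
    rw [add_comm 1 k, show n + 1 - (k + 1) = n - k by omega]

theorem sum_antidiagonal_mul_HVA_zero (f : ℕ → ℝ) (n : ℕ) :
    ∑ kj ∈ antidiagonal n, f kj.1 * HVA g h kj.2 0 = f n := by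
  cases n with
  | zero => simp [HVA_zero_zero]
  | succ n => simp [Nat.sum_antidiagonal_succ', HVA_succ_zero, HVA_zero_zero]

theorem HVA_one_right (hg : g 0 = 0) (n : ℕ) : HVA g h n 1 = (h n)⁻¹ * g n := by
  rw [HVA_succ_right hg, sum_antidiagonal_mul_HVA_zero]

end Recursion

theorem HVA_id_one (n m : ℕ) :
    HVA (fun k => (k : ℝ)) (fun _ => 1) n (m + 1) = (n + m).choose (2 * m + 1) := by
  induction m generalizing n with
  | zero => simp [HVA_one_right]
  | succ m ih =>
    rw [HVA_succ_right (by simp), inv_one, one_mul]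
    simp_rw [ih]
    have conv := Nat.sum_antidiagonal_choose_mul_add_choose (a := 1) (by omega : m ≤ 2 * m + 1) n
    simp only [Nat.choose_one_right] at conv
    rw [show 1 + (2 * m + 1) + 1 = 2 * (m + 1) + 1 by ring] at conv
    rw [← add_assoc]
    exact_mod_cast conv

theorem HVA_sq_id (n m : ℕ) :
    HVA (fun k => (k : ℝ) ^ 2) (fun k => (k : ℝ)) n (m + 1) =
      (n + m).choose (2 * m + 1) / (m + 1).factorial := by
  induction m generalizing n with
  | zero =>
    rcases eq_or_ne n 0 with rfl | hn
    · simp [HVA_one_right]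
    · rw [HVA_one_right (by simp)]
      field_simp
      simp
  | succ m ih =>
    rcases eq_or_ne n 0 with rfl | hn
    · rw [HVA_zero_succ, Nat.choose_eq_zero_of_lt (by omega), Nat.cast_zero, zero_div]
    rw [HVA_succ_right (by simp)]
    simp_rw [ih, mul_div_assoc', ← sum_div]
    have hsum :
        ∑ kj ∈ antidiagonal n, (kj.1 : ℝ) ^ 2 * ((kj.2 + m).choose (2 * m + 1) : ℝ) =
          (n + m + 1).choose (2 * m + 3) + 2 * (n + m + 1).choose (2 * m + 4) := by
      simp_rw [← Nat.cast_pow, ← Nat.cast_mul, ← Nat.cast_sum,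
        Nat.sq_eq_choose_one_add_two_mul_choose_two, add_mul, mul_assoc, sum_add_distrib,
        ← mul_sum, Nat.sum_antidiagonal_choose_mul_add_choose (by omega : m ≤ 2 * m + 1)]
      push_cast
      ring_nf
    have hfactor : ((m : ℝ) + 2) *
        ((n + m + 1).choose (2 * m + 3) + 2 * (n + m + 1).choose (2 * m + 4)) =
          n * (n + m + 1).choose (2 * m + 3) := by
      exact_mod_cast Nat.mul_choose_add_two_mul_choose n m
    rw [hsum, Nat.factorial_succ (m + 1), show n + (m + 1) = n + m + 1 by ring,
      show 2 * (m + 1) + 1 = 2 * m + 3 by ring]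
    push_cast
    field_simp
    linear_combination hfactor

theorem HVA_id_one_nonneg (n m : ℕ) : 0 ≤ HVA (fun k => (k : ℝ)) (fun _ => 1) n m := by
  rcases m with _ | m
  · rcases n with _ | n <;> simp [HVA_zero_zero, HVA_succ_zero]
  · rw [HVA_id_one]
    positivity

theorem HVA_sq_id_eq_div_factorial (n m : ℕ) :
    HVA (fun k => (k : ℝ) ^ 2) (fun k => (k : ℝ)) n m =
      HVA (fun k => (k : ℝ)) (fun _ => 1) n m / m.factorial := by
  rcases m with _ | m
  · rcases n with _ | n <;> simp [HVA_zero_zero, HVA_succ_zero]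
  · rw [HVA_sq_id, HVA_id_one]

theorem HVA_id_one_mul_le_sq_right (n m : ℕ) :
    HVA (fun k => (k : ℝ)) (fun _ => 1) n m * HVA (fun k => (k : ℝ)) (fun _ => 1) n (m + 2) ≤
      HVA (fun k => (k : ℝ)) (fun _ => 1) n (m + 1) ^ 2 := by
  rcases m with _ | m
  · rcases n with _ | n <;> simp [HVA_zero_succ, HVA_succ_zero, sq_nonneg]
  · rw [HVA_id_one, HVA_id_one, HVA_id_one]
    have h := Nat.choose_mul_choose_add_four_le_sq (n + m) (2 * m + 1)
    rw [show n + m + 2 = n + (m + 2) by ring, show n + m + 1 = n + (m + 1) by ring] at h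
    exact_mod_cast h

theorem HVA_id_one_mul_le_sq_left (n m : ℕ) :
    HVA (fun k => (k : ℝ)) (fun _ => 1) n m * HVA (fun k => (k : ℝ)) (fun _ => 1) (n + 2) m ≤
      HVA (fun k => (k : ℝ)) (fun _ => 1) (n + 1) m ^ 2 := by
  rcases m with _ | m
  · simp [HVA_succ_zero]
  · rw [HVA_id_one, HVA_id_one, HVA_id_one]
    have h := Nat.choose_mul_choose_add_two_le_sq (n + m) (2 * m + 1)
    rw [show n + m + 2 = n + 2 + m by ring, show n + m + 1 = n + 1 + m by ring] at h
    exact_mod_cast h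

/-- The double sequences `A^{id,1}` and `A^{s,id}` (with `s(n) = n²`) are both
horizontally and vertically log-concave. -/
theorem A_id_one_and_A_s_id_logConcave :
    (∀ n m : ℕ, 1 ≤ n → 1 ≤ m →
      HVA (fun k => (k : ℝ)) (fun _ => 1) n m ^ 2 ≥
        HVA (fun k => (k : ℝ)) (fun _ => 1) n (m - 1) *
          HVA (fun k => (k : ℝ)) (fun _ => 1) n (m + 1)) ∧
    (∀ n m : ℕ, 1 ≤ m → 2 ≤ n →
      HVA (fun k => (k : ℝ)) (fun _ => 1) n m ^ 2 ≥
        HVA (fun k => (k : ℝ)) (fun _ => 1) (n - 1) m *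
          HVA (fun k => (k : ℝ)) (fun _ => 1) (n + 1) m) ∧
    (∀ n m : ℕ, 1 ≤ n → 1 ≤ m →
      HVA (fun k => (k : ℝ) ^ 2) (fun k => (k : ℝ)) n m ^ 2 ≥
        HVA (fun k => (k : ℝ) ^ 2) (fun k => (k : ℝ)) n (m - 1) *
          HVA (fun k => (k : ℝ) ^ 2) (fun k => (k : ℝ)) n (m + 1)) ∧
    (∀ n m : ℕ, 1 ≤ m → 2 ≤ n →
      HVA (fun k => (k : ℝ) ^ 2) (fun k => (k : ℝ)) n m ^ 2 ≥
        HVA (fun k => (k : ℝ) ^ 2) (fun k => (k : ℝ)) (n - 1) m *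
          HVA (fun k => (k : ℝ) ^ 2) (fun k => (k : ℝ)) (n + 1) m) := by
  refine ⟨fun n m _ hm => ?_, fun n m _ hn => ?_, fun n m _ hm => ?_, fun n m _ hn => ?_⟩
  · obtain ⟨m, rfl⟩ : ∃ k, m = k + 1 := ⟨m - 1, by omega⟩
    exact HVA_id_one_mul_le_sq_right n m
  · obtain ⟨n, rfl⟩ : ∃ k, n = k + 1 := ⟨n - 1, by omega⟩
    exact HVA_id_one_mul_le_sq_left n m
  · obtain ⟨m, rfl⟩ : ∃ k, m = k + 1 := ⟨m - 1, by omega⟩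
    simp only [HVA_sq_id_eq_div_factorial, Nat.add_sub_cancel]
    refine div_mul_div_le_div_sq (HVA_id_one_mul_le_sq_right n m)
      (mul_nonneg (HVA_id_one_nonneg _ _) (HVA_id_one_nonneg _ _)) (by positivity) ?_
    exact_mod_cast Nat.factorial_succ_sq_le m
  · obtain ⟨n, rfl⟩ : ∃ k, n = k + 1 := ⟨n - 1, by omega⟩
    simp only [HVA_sq_id_eq_div_factorial, Nat.add_sub_cancel]
    refine div_mul_div_le_div_sq (HVA_id_one_mul_le_sq_left n m)
      (mul_nonneg (HVA_id_one_nonneg _ _) (HVA_id_one_nonneg _ _)) (by positivity) (sq _).le
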